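/- The universal property of the pushout of stock & flow diagrams: given any commuting square of stock & flow diagram morphisms over the span (Y, ψ) ← (X, φ) → (Z, κ) (with legs surjective on flows) into a diagram (W, ω), the unique presheaf map e : Z ⨿_X Y → W induced by the presheaf pushout is itself a morphism of stock & flow diagrams, i.e., for every flow f ∈ W(Flow) with nonempty preimage under e(Flow), ω_f = Σ_{x ∈ e(Flow)⁻¹(f)} γ_x ∘ e(Link)*. -/
import Mathlib


/-- A primitive stock & flow diagram: a `FinSet`-valued presheaf on the schema
category `Fl` freely generated by the graph with objects
Stock, Flow, Inflow, Outflow, Link, CTLink and arrows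
up, out : Outflow → Stock, Flow; down, in : Inflow → Stock, Flow;
fl : Link → Flow; st : CTLink → Stock; ct : CTLink → Link.
Since `Fl` is free on this graph, such a functor is exactly the data below. -/
structure PrimSF where
  Stock : Type
  Flow : Type
  Inflow : Type
  Outflow : Type
  Link : Type
  CTLink : Type
  up : Outflow → Stock
  out : Outflow → Flow
  down : Inflow → Stock
  inn : Inflow → Flow
  fl : Link → Flow
  st : CTLink → Stock
  ct : CTLink → Link
  finStock : Finite Stock
  finFlow : Finite Flow
  finInflow : Finite Inflow
  finOutflow : Finite Outflow
  finLink : Finite Link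
  finCTLink : Finite CTLink

attribute [instance] PrimSF.finStock PrimSF.finFlow PrimSF.finInflow
  PrimSF.finOutflow PrimSF.finLink PrimSF.finCTLink

/-- The mono conditions: `X(in)`, `X(out)`, `X(ct)` are monomorphisms. -/
def PrimSF.Primitive (X : PrimSF) : Prop :=
  Function.Injective X.inn ∧ Function.Injective X.out ∧ Function.Injective X.ct

/-- A stock & flow diagram: a primitive stock & flow diagram together with a
continuous flow function `φ_f : ℝ^{X(fl)⁻¹(f)} → ℝ` for each flow `f`. -/
structure SF extends PrimSF where
  prim : toPrimSF.Primitive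
  phi : ∀ f : toPrimSF.Flow, ({l : toPrimSF.Link // toPrimSF.fl l = f} → ℝ) → ℝ
  phi_cont : ∀ f, Continuous (phi f)

/-- A morphism of presheaves on `Fl` (a natural transformation). -/
structure PrimHom (X Y : PrimSF) where
  stock : X.Stock → Y.Stock
  flow : X.Flow → Y.Flow
  inflow : X.Inflow → Y.Inflow
  outflow : X.Outflow → Y.Outflow
  link : X.Link → Y.Link
  ctlink : X.CTLink → Y.CTLink
  nat_up : ∀ o, Y.up (outflow o) = stock (X.up o)
  nat_out : ∀ o, Y.out (outflow o) = flow (X.out o)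
  nat_down : ∀ i, Y.down (inflow i) = stock (X.down i)
  nat_in : ∀ i, Y.inn (inflow i) = flow (X.inn i)
  nat_fl : ∀ l, Y.fl (link l) = flow (X.fl l)
  nat_st : ∀ c, Y.st (ctlink c) = stock (X.st c)
  nat_ct : ∀ c, Y.ct (ctlink c) = link (X.ct c)

/-- Composition of presheaf morphisms. -/
def PrimHom.comp {X Y Z : PrimSF} (G : PrimHom Y Z) (F : PrimHom X Y) : PrimHom X Z where
  stock := G.stock ∘ F.stock
  flow := G.flow ∘ F.flow
  inflow := G.inflow ∘ F.inflow
  outflow := G.outflow ∘ F.outflow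
  link := G.link ∘ F.link
  ctlink := G.ctlink ∘ F.ctlink
  nat_up := fun o => by simp only [Function.comp_apply, G.nat_up, F.nat_up]
  nat_out := fun o => by simp only [Function.comp_apply, G.nat_out, F.nat_out]
  nat_down := fun i => by simp only [Function.comp_apply, G.nat_down, F.nat_down]
  nat_in := fun i => by simp only [Function.comp_apply, G.nat_in, F.nat_in]
  nat_fl := fun l => by simp only [Function.comp_apply, G.nat_fl, F.nat_fl]
  nat_st := fun c => by simp only [Function.comp_apply, G.nat_st, F.nat_st]
  nat_ct := fun c => by simp only [Function.comp_apply, G.nat_ct, F.nat_ct]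

/-- The induced map on link fibers `F(Link) : X(fl)⁻¹(f) → Y(fl)⁻¹(g)` when
`F(Flow)(f) = g`, which exists by naturality along `fl : Link → Flow`. -/
def PrimHom.linkMap {X Y : PrimSF} (F : PrimHom X Y) {f : X.Flow} {g : Y.Flow}
    (hg : F.flow f = g) (l : {l : X.Link // X.fl l = f}) : {l' : Y.Link // Y.fl l' = g} :=
  ⟨F.link l.1, by rw [F.nat_fl, l.2, hg]⟩

/-- `F` is a morphism of stock & flow diagrams `(X, φ) → (Y, ψ)`: for every flow
`g` of `Y` with nonempty preimage, `ψ_g = Σ_{f ∈ F(Flow)⁻¹(g)} φ_f ∘ F(Link)*`,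
where `F(Link)*` is precomposition with the induced map on link fibers. -/
def IsSF (X Y : SF) (F : PrimHom X.toPrimSF Y.toPrimSF) : Prop :=
  ∀ g : Y.toPrimSF.Flow, (∃ f, F.flow f = g) →
    Y.phi g = fun x => ∑ᶠ f : {f : X.toPrimSF.Flow // F.flow f = g},
      X.phi f.1 (fun l => x (F.linkMap f.2 l))

/-- The pushout flow functions: `γ_f = Σ_{x ∈ F(Flow)⁻¹(f)} φ_x ∘ F(Link)*`,
where `F` is the composite `X → P` into the presheaf pushout. -/
noncomputable def pushPhi (X : SF) (P : PrimSF) (F : PrimHom X.toPrimSF P)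
    (f : P.Flow) (x : {l : P.Link // P.fl l = f} → ℝ) : ℝ :=
  ∑ᶠ g : {g : X.toPrimSF.Flow // F.flow g = f}, X.phi g.1 (fun l => x (F.linkMap g.2 l))

theorem pushPhi_cont (X : SF) (P : PrimSF) (F : PrimHom X.toPrimSF P) (f : P.Flow) :
    Continuous (pushPhi X P F f) := by
  haveI : Fintype {g : X.toPrimSF.Flow // F.flow g = f} := Fintype.ofFinite _
  have h : pushPhi X P F f = fun x => ∑ g : {g : X.toPrimSF.Flow // F.flow g = f},
      X.phi g.1 (fun l => x (F.linkMap g.2 l)) := by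
    funext x
    exact finsum_eq_sum_of_fintype _
  rw [h]
  exact continuous_finset_sum _ fun g _ =>
    (X.phi_cont _).comp (continuous_pi fun l => continuous_apply _)

/-- The presheaf pushout `Z ⨿_X Y` equipped with the pushout flow functions
`γ`, as a stock & flow diagram. -/
noncomputable def PushSF (X : SF) (P : PrimSF) (hP : P.Primitive)
    (F : PrimHom X.toPrimSF P) : SF where
  toPrimSF := P
  prim := hP
  phi := pushPhi X P F
  phi_cont := pushPhi_cont X P F


lemma finsum_fiber_comp {A B C : Type} [Finite A] [Finite B] (u : A → B) (v : B → C) (c : C)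
    (F : {a : A // v (u a) = c} → ℝ) :
    (∑ᶠ b : {b : B // v b = c}, ∑ᶠ a : {a : A // u a = b.1},
        F ⟨a.1, by rw [a.2]; exact b.2⟩) = ∑ᶠ a, F a := by
  classical
  haveI : Fintype {b : B // v b = c} := Fintype.ofFinite _
  haveI : Fintype {a : A // v (u a) = c} := Fintype.ofFinite _
  haveI : ∀ b : {b : B // v b = c}, Fintype {a : A // u a = b.1} := fun _ => Fintype.ofFinite _
  simp only [finsum_eq_sum_of_fintype]
  rw [Finset.sum_sigma']
  apply Finset.sum_bij (fun p _ => (⟨p.2.1, by rw [p.2.2]; exact p.1.2⟩ : {a : A // v (u a) = c}))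
  · intros; exact Finset.mem_univ _
  · rintro ⟨⟨b, hb⟩, ⟨a, ha⟩⟩ _ ⟨⟨b', hb'⟩, ⟨a', ha'⟩⟩ _ h
    simp only [Subtype.mk.injEq] at h
    subst h
    have hb2 : b = b' := ha.symm.trans ha'
    subst hb2
    rfl
  · rintro ⟨a, ha⟩ _
    exact ⟨⟨⟨u a, ha⟩, ⟨a, rfl⟩⟩, Finset.mem_univ _, rfl⟩
  · intros; rfl

lemma finsum_subtype_congr {A : Type} [Finite A] {P Q : A → Prop} (h : ∀ a, P a ↔ Q a)
    (F : {a : A // P a} → ℝ) (G : {a : A // Q a} → ℝ)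
    (hFG : ∀ a : {a : A // P a}, F a = G ⟨a.1, (h a.1).mp a.2⟩) :
    ∑ᶠ a, F a = ∑ᶠ a, G a := by
  apply finsum_eq_of_bijective (fun a : {a : A // P a} => (⟨a.1, (h a.1).mp a.2⟩ : {a : A // Q a}))
  · constructor
    · rintro ⟨a, ha⟩ ⟨b, hb⟩ hab
      simpa using hab
    · intro b
      exact ⟨⟨b.1, (h b.1).mpr b.2⟩, Subtype.ext rfl⟩
  · exact hFG

theorem PrimHom.ext' {X Y : PrimSF} {F G : PrimHom X Y}
    (h1 : F.stock = G.stock) (h2 : F.flow = G.flow) (h3 : F.inflow = G.inflow)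
    (h4 : F.outflow = G.outflow) (h5 : F.link = G.link) (h6 : F.ctlink = G.ctlink) :
    F = G := by
  cases F; cases G; simp_all

def PrimHom.idHom (P : PrimSF) : PrimHom P P where
  stock := id
  flow := id
  inflow := id
  outflow := id
  link := id
  ctlink := id
  nat_up := fun _ => rfl
  nat_out := fun _ => rfl
  nat_down := fun _ => rfl
  nat_in := fun _ => rfl
  nat_fl := fun _ => rfl
  nat_st := fun _ => rfl
  nat_ct := fun _ => rfl

/-- The image sub-presheaf of a pair of morphisms into `P`. -/
def imageSub {Z Y : PrimSF} (P : PrimSF) (p1 : PrimHom Z P) (p2 : PrimHom Y P) : PrimSF where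
  Stock := {a : P.Stock // a ∈ Set.range p1.stock ∪ Set.range p2.stock}
  Flow := {a : P.Flow // a ∈ Set.range p1.flow ∪ Set.range p2.flow}
  Inflow := {a : P.Inflow // a ∈ Set.range p1.inflow ∪ Set.range p2.inflow}
  Outflow := {a : P.Outflow // a ∈ Set.range p1.outflow ∪ Set.range p2.outflow}
  Link := {a : P.Link // a ∈ Set.range p1.link ∪ Set.range p2.link}
  CTLink := {a : P.CTLink // a ∈ Set.range p1.ctlink ∪ Set.range p2.ctlink}
  up := fun o => ⟨P.up o.1, by
    rcases o.2 with ⟨z, hz⟩ | ⟨y, hy⟩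
    · exact Or.inl ⟨Z.up z, by rw [← p1.nat_up, hz]⟩
    · exact Or.inr ⟨Y.up y, by rw [← p2.nat_up, hy]⟩⟩
  out := fun o => ⟨P.out o.1, by
    rcases o.2 with ⟨z, hz⟩ | ⟨y, hy⟩
    · exact Or.inl ⟨Z.out z, by rw [← p1.nat_out, hz]⟩
    · exact Or.inr ⟨Y.out y, by rw [← p2.nat_out, hy]⟩⟩
  down := fun i => ⟨P.down i.1, by
    rcases i.2 with ⟨z, hz⟩ | ⟨y, hy⟩
    · exact Or.inl ⟨Z.down z, by rw [← p1.nat_down, hz]⟩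
    · exact Or.inr ⟨Y.down y, by rw [← p2.nat_down, hy]⟩⟩
  inn := fun i => ⟨P.inn i.1, by
    rcases i.2 with ⟨z, hz⟩ | ⟨y, hy⟩
    · exact Or.inl ⟨Z.inn z, by rw [← p1.nat_in, hz]⟩
    · exact Or.inr ⟨Y.inn y, by rw [← p2.nat_in, hy]⟩⟩
  fl := fun l => ⟨P.fl l.1, by
    rcases l.2 with ⟨z, hz⟩ | ⟨y, hy⟩
    · exact Or.inl ⟨Z.fl z, by rw [← p1.nat_fl, hz]⟩
    · exact Or.inr ⟨Y.fl y, by rw [← p2.nat_fl, hy]⟩⟩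
  st := fun c => ⟨P.st c.1, by
    rcases c.2 with ⟨z, hz⟩ | ⟨y, hy⟩
    · exact Or.inl ⟨Z.st z, by rw [← p1.nat_st, hz]⟩
    · exact Or.inr ⟨Y.st y, by rw [← p2.nat_st, hy]⟩⟩
  ct := fun c => ⟨P.ct c.1, by
    rcases c.2 with ⟨z, hz⟩ | ⟨y, hy⟩
    · exact Or.inl ⟨Z.ct z, by rw [← p1.nat_ct, hz]⟩
    · exact Or.inr ⟨Y.ct y, by rw [← p2.nat_ct, hy]⟩⟩
  finStock := Subtype.finite
  finFlow := Subtype.finite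
  finInflow := Subtype.finite
  finOutflow := Subtype.finite
  finLink := Subtype.finite
  finCTLink := Subtype.finite

def imageIncl {Z Y : PrimSF} (P : PrimSF) (p1 : PrimHom Z P) (p2 : PrimHom Y P) :
    PrimHom (imageSub P p1 p2) P where
  stock := Subtype.val
  flow := Subtype.val
  inflow := Subtype.val
  outflow := Subtype.val
  link := Subtype.val
  ctlink := Subtype.val
  nat_up := fun _ => rfl
  nat_out := fun _ => rfl
  nat_down := fun _ => rfl
  nat_in := fun _ => rfl
  nat_fl := fun _ => rfl
  nat_st := fun _ => rfl
  nat_ct := fun _ => rfl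

def corestrict1 {Z Y : PrimSF} (P : PrimSF) (p1 : PrimHom Z P) (p2 : PrimHom Y P) :
    PrimHom Z (imageSub P p1 p2) where
  stock := fun z => ⟨p1.stock z, Or.inl ⟨z, rfl⟩⟩
  flow := fun z => ⟨p1.flow z, Or.inl ⟨z, rfl⟩⟩
  inflow := fun z => ⟨p1.inflow z, Or.inl ⟨z, rfl⟩⟩
  outflow := fun z => ⟨p1.outflow z, Or.inl ⟨z, rfl⟩⟩
  link := fun z => ⟨p1.link z, Or.inl ⟨z, rfl⟩⟩
  ctlink := fun z => ⟨p1.ctlink z, Or.inl ⟨z, rfl⟩⟩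
  nat_up := fun o => Subtype.ext (p1.nat_up o)
  nat_out := fun o => Subtype.ext (p1.nat_out o)
  nat_down := fun i => Subtype.ext (p1.nat_down i)
  nat_in := fun i => Subtype.ext (p1.nat_in i)
  nat_fl := fun l => Subtype.ext (p1.nat_fl l)
  nat_st := fun c => Subtype.ext (p1.nat_st c)
  nat_ct := fun c => Subtype.ext (p1.nat_ct c)

def corestrict2 {Z Y : PrimSF} (P : PrimSF) (p1 : PrimHom Z P) (p2 : PrimHom Y P) :
    PrimHom Y (imageSub P p1 p2) where
  stock := fun z => ⟨p2.stock z, Or.inr ⟨z, rfl⟩⟩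
  flow := fun z => ⟨p2.flow z, Or.inr ⟨z, rfl⟩⟩
  inflow := fun z => ⟨p2.inflow z, Or.inr ⟨z, rfl⟩⟩
  outflow := fun z => ⟨p2.outflow z, Or.inr ⟨z, rfl⟩⟩
  link := fun z => ⟨p2.link z, Or.inr ⟨z, rfl⟩⟩
  ctlink := fun z => ⟨p2.ctlink z, Or.inr ⟨z, rfl⟩⟩
  nat_up := fun o => Subtype.ext (p2.nat_up o)
  nat_out := fun o => Subtype.ext (p2.nat_out o)
  nat_down := fun i => Subtype.ext (p2.nat_down i)
  nat_in := fun i => Subtype.ext (p2.nat_in i)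
  nat_fl := fun l => Subtype.ext (p2.nat_fl l)
  nat_st := fun c => Subtype.ext (p2.nat_st c)
  nat_ct := fun c => Subtype.ext (p2.nat_ct c)

lemma PrimHom.comp_assoc {A B C D : PrimSF} (h : PrimHom C D) (g : PrimHom B C)
    (f : PrimHom A B) : (h.comp g).comp f = h.comp (g.comp f) :=
  PrimHom.ext' rfl rfl rfl rfl rfl rfl

lemma PrimHom.id_comp {A B : PrimSF} (f : PrimHom A B) : (PrimHom.idHom B).comp f = f :=
  PrimHom.ext' rfl rfl rfl rfl rfl rfl

lemma imageIncl_comp_corestrict1 {Z Y : PrimSF} (P : PrimSF) (p1 : PrimHom Z P)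
    (p2 : PrimHom Y P) : (imageIncl P p1 p2).comp (corestrict1 P p1 p2) = p1 :=
  PrimHom.ext' rfl rfl rfl rfl rfl rfl

lemma imageIncl_comp_corestrict2 {Z Y : PrimSF} (P : PrimSF) (p1 : PrimHom Z P)
    (p2 : PrimHom Y P) : (imageIncl P p1 p2).comp (corestrict2 P p1 p2) = p2 :=
  PrimHom.ext' rfl rfl rfl rfl rfl rfl

/-- the universal property of the pushout of stock & flow
diagrams: given a commuting cocone of stock & flow morphisms `q₁ : Z → W`,
`q₂ : Y → W` over the span (with legs surjective on flows), the unique presheaf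
map `e : Z ⨿_X Y → W` induced by the presheaf pushout is itself a morphism of
stock & flow diagrams from `(Z ⨿_X Y, γ)` to `(W, ω)`. -/
theorem pushout_induced_map_is_stockflow (X Y Z : SF)
    (s1 : PrimHom X.toPrimSF Z.toPrimSF) (s2 : PrimHom X.toPrimSF Y.toPrimSF)
    (hs1 : IsSF X Z s1) (hs2 : IsSF X Y s2)
    (hsurj1 : Function.Surjective s1.flow) (hsurj2 : Function.Surjective s2.flow)
    (P : PrimSF) (hP : P.Primitive)
    (p1 : PrimHom Z.toPrimSF P) (p2 : PrimHom Y.toPrimSF P)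
    (hcomm : p1.comp s1 = p2.comp s2)
    (huniv : ∀ (Q : PrimSF) (q1 : PrimHom Z.toPrimSF Q) (q2 : PrimHom Y.toPrimSF Q),
      q1.comp s1 = q2.comp s2 → ∃! e : PrimHom P Q, e.comp p1 = q1 ∧ e.comp p2 = q2)
    (W : SF) (q1 : PrimHom Z.toPrimSF W.toPrimSF) (q2 : PrimHom Y.toPrimSF W.toPrimSF)
    (hq1 : IsSF Z W q1) (hq2 : IsSF Y W q2) (hq : q1.comp s1 = q2.comp s2)
    (e : PrimHom P W.toPrimSF) (he1 : e.comp p1 = q1) (he2 : e.comp p2 = q2) :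
    IsSF (PushSF X P hP (p2.comp s2)) W e := by
  have he2flow : ∀ y, e.flow (p2.flow y) = q2.flow y := fun y =>
    congrFun (congrArg PrimHom.flow he2) y
  have he2link : ∀ l, e.link (p2.link l) = q2.link l := fun l =>
    congrFun (congrArg PrimHom.link he2) l
  have hp2surj : Function.Surjective p2.flow := by
    have hcomm' : (corestrict1 P p1 p2).comp s1 = (corestrict2 P p1 p2).comp s2 := by
      apply PrimHom.ext'
      · funext a; exact Subtype.ext (congrFun (congrArg PrimHom.stock hcomm) a)
      · funext a; exact Subtype.ext (congrFun (congrArg PrimHom.flow hcomm) a)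
      · funext a; exact Subtype.ext (congrFun (congrArg PrimHom.inflow hcomm) a)
      · funext a; exact Subtype.ext (congrFun (congrArg PrimHom.outflow hcomm) a)
      · funext a; exact Subtype.ext (congrFun (congrArg PrimHom.link hcomm) a)
      · funext a; exact Subtype.ext (congrFun (congrArg PrimHom.ctlink hcomm) a)
    obtain ⟨E, ⟨hE1, hE2⟩, _⟩ :=
      huniv (imageSub P p1 p2) (corestrict1 P p1 p2) (corestrict2 P p1 p2) hcomm'
    obtain ⟨E', _, hE'uniq⟩ := huniv P p1 p2 hcomm
    have ha : (imageIncl P p1 p2).comp E = E' := by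
      apply hE'uniq
      constructor
      · rw [PrimHom.comp_assoc, hE1, imageIncl_comp_corestrict1]
      · rw [PrimHom.comp_assoc, hE2, imageIncl_comp_corestrict2]
    have hb : PrimHom.idHom P = E' :=
      hE'uniq _ ⟨PrimHom.id_comp p1, PrimHom.id_comp p2⟩
    have hkey : ∀ f : P.Flow, (E.flow f).1 = f := fun f =>
      congrFun (congrArg PrimHom.flow (ha.trans hb.symm)) f
    intro f
    rcases (E.flow f).2 with ⟨z, hz⟩ | ⟨y, hy⟩
    · obtain ⟨xx, hx⟩ := hsurj1 z
      refine ⟨s2.flow xx, ?_⟩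
      have hc : p1.flow (s1.flow xx) = p2.flow (s2.flow xx) :=
        congrFun (congrArg PrimHom.flow hcomm) xx
      rw [← hc, hx, hz]
      exact hkey f
    · exact ⟨y, hy.trans (hkey f)⟩
  intro g hg
  obtain ⟨f0, hf0⟩ := hg
  obtain ⟨y0, hy0⟩ := hp2surj f0
  have hgy : q2.flow y0 = g := by rw [← he2flow, hy0]; exact hf0
  rw [hq2 g ⟨y0, hgy⟩]
  funext x
  show (∑ᶠ y : {y : Y.toPrimSF.Flow // q2.flow y = g},
        Y.phi y.1 (fun l => x (q2.linkMap y.2 l)))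
      = ∑ᶠ f : {f : P.Flow // e.flow f = g},
        pushPhi X P (p2.comp s2) f.1 (fun l => x (e.linkMap f.2 l))
  calc (∑ᶠ y : {y : Y.toPrimSF.Flow // q2.flow y = g},
        Y.phi y.1 (fun l => x (q2.linkMap y.2 l)))
      = ∑ᶠ h : {h : X.toPrimSF.Flow // q2.flow (s2.flow h) = g},
          X.phi h.1 (fun l => x ((q2.comp s2).linkMap h.2 l)) := by
        rw [← finsum_fiber_comp s2.flow q2.flow g
          (fun h => X.phi h.1 (fun l => x ((q2.comp s2).linkMap h.2 l)))]
        apply finsum_congr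
        intro y
        simp only [hs2 y.1 (hsurj2 y.1)]
        apply finsum_congr
        intro h
        congr 1
    _ = ∑ᶠ h : {h : X.toPrimSF.Flow // e.flow ((p2.comp s2).flow h) = g},
          X.phi h.1 (fun l => x (e.linkMap h.2 ((p2.comp s2).linkMap rfl l))) := by
        apply finsum_subtype_congr
          (fun a => by constructor <;> intro hh <;> rw [← hh] <;> exact (he2flow _).symm ▸ rfl)
        intro h
        congr 1
        funext l
        congr 1
        exact Subtype.ext (he2link _).symm
    _ = ∑ᶠ f : {f : P.Flow // e.flow f = g},
          pushPhi X P (p2.comp s2) f.1 (fun l => x (e.linkMap f.2 l)) := by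
        rw [← finsum_fiber_comp (p2.comp s2).flow e.flow g
          (fun h => X.phi h.1 (fun l => x (e.linkMap h.2 ((p2.comp s2).linkMap rfl l))))]
        apply finsum_congr
        intro f
        simp only [pushPhi]
        apply finsum_congr
        intro h
        congr 1
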